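/- arXiv:2402.05287 — 2 statements merged into one kernel-verified Lean document; each statement's English description precedes it below -/
import Mathlib

section
/- Suppose the conservative three-wave system with Jⱼ = i cⱼ, cⱼ ∈ ℝ \ {0}, satisfies c₀·c₂ > 0. Then the energies E₀(t) and E₂(t) are uniformly bounded in time: for all t, E₀(t) ≤ |c₀| · (E₀(0)/|c₀| + E₂(0)/|c₂|) and similarly for E₂. -/
/-! `c₂ E₀ + c₀ E₂ = c₀ c₂ C₀⁺` is conserved along the flow. When `c₀ c₂ > 0` its two weights
have the same sign, so since both energies are nonnegative, each one is bounded by the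
conserved quantity. -/

open ComplexConjugate

theorem hasDerivAt_norm_sq_complex {f : ℝ → ℂ} {f' : ℂ} {t : ℝ} (hf : HasDerivAt f f' t) :
    HasDerivAt (fun s => ‖f s‖ ^ 2) (2 * (f' * conj (f t)).re) t := by
  simpa only [Complex.inner] using hf.norm_sq

theorem manleyRowe_eq {A0 A1 A2 : ℝ → ℂ} {c0 c2 : ℝ}
    (hA0 : Differentiable ℝ A0) (hA2 : Differentiable ℝ A2)
    (hode0 : ∀ t, deriv A0 t = (Complex.I * c0) * conj (A1 t) * A2 t)
    (hode2 : ∀ t, deriv A2 t = (Complex.I * c2) * A0 t * A1 t) (t : ℝ) :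
    c2 * ‖A0 t‖ ^ 2 + c0 * ‖A2 t‖ ^ 2 = c2 * ‖A0 0‖ ^ 2 + c0 * ‖A2 0‖ ^ 2 := by
  -- the two terms of the derivative are `∓ 2 c₀ c₂ Im (A₀ A₁ conj A₂)` and cancel
  have hderiv : ∀ s, HasDerivAt (fun s => c2 * ‖A0 s‖ ^ 2 + c0 * ‖A2 s‖ ^ 2) 0 s := by
    intro s
    refine (((hasDerivAt_norm_sq_complex (hA0 s).hasDerivAt).const_mul c2).add
      ((hasDerivAt_norm_sq_complex (hA2 s).hasDerivAt).const_mul c0)).congr_deriv ?_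
    rw [hode0, hode2]
    simp only [Complex.mul_re, Complex.mul_im, Complex.I_re, Complex.I_im,
      Complex.ofReal_re, Complex.ofReal_im, Complex.conj_re, Complex.conj_im]
    ring
  exact is_const_of_deriv_eq_zero (fun s => (hderiv s).differentiableAt)
    (fun s => (hderiv s).deriv) t 0

theorem le_of_weighted_add_eq {a b x y x₀ y₀ : ℝ} (hab : 0 < a * b) (hy : 0 ≤ y)
    (h : b * x + a * y = b * x₀ + a * y₀) : x ≤ |a| * (x₀ / |a| + y₀ / |b|) := by
  have ha : a ≠ 0 := left_ne_zero_of_mul hab.ne'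
  have hb : b ≠ 0 := right_ne_zero_of_mul hab.ne'
  have hq : 0 < a / b := by
    rw [← mul_div_mul_right a b hb]
    exact div_pos hab (mul_self_pos.2 hb)
  have hbound : |a| * (x₀ / |a| + y₀ / |b|) = x₀ + y₀ * (a / b) := by
    rw [mul_add, mul_div_cancel₀ _ (abs_ne_zero.2 ha), mul_div_left_comm, ← abs_div,
      abs_of_pos hq]
  have hx : x = x₀ + a / b * (y₀ - y) := by
    field_simp
    linarith
  rw [hbound, hx]
  nlinarith

theorem stmt_3_general (A0 A1 A2 : ℝ → ℂ) (c0 c2 : ℝ)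
    (hA0 : Differentiable ℝ A0)
    (hA2 : Differentiable ℝ A2)
    (hsign : 0 < c0 * c2)
    (hode0 : ∀ t, deriv A0 t = (Complex.I * c0) * (starRingEnd ℂ) (A1 t) * A2 t)
    (hode2 : ∀ t, deriv A2 t = (Complex.I * c2) * A0 t * A1 t) :
    ∀ t : ℝ,
      (‖A0 t‖)^2
        ≤ |c0| * ((‖A0 0‖)^2 / |c0| + (‖A2 0‖)^2 / |c2|)
      ∧ (‖A2 t‖)^2
        ≤ |c2| * ((‖A0 0‖)^2 / |c0| + (‖A2 0‖)^2 / |c2|) := by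
  intro t
  have hconserved := manleyRowe_eq hA0 hA2 hode0 hode2 t
  refine ⟨le_of_weighted_add_eq hsign (sq_nonneg _) hconserved, ?_⟩
  rw [add_comm (_ / |c0|)]
  exact le_of_weighted_add_eq (mul_comm c0 c2 ▸ hsign) (sq_nonneg ‖A0 t‖)
    (by linarith)

/-- If `c₀ c₂ > 0` in the conservative three-wave system, the energies
`E₀` and `E₂` are uniformly bounded in terms of the initial data. -/
theorem stmt_3 (A0 A1 A2 : ℝ → ℂ) (c0 c1 c2 : ℝ)
    (hA0 : Differentiable ℝ A0) (hA1 : Differentiable ℝ A1)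
    (hA2 : Differentiable ℝ A2)
    (hc0 : c0 ≠ 0) (hc1 : c1 ≠ 0) (hc2 : c2 ≠ 0)
    (hsign : 0 < c0 * c2)
    (hode0 : ∀ t, deriv A0 t = (Complex.I * c0) * (starRingEnd ℂ) (A1 t) * A2 t)
    (hode1 : ∀ t, deriv A1 t = (Complex.I * c1) * (starRingEnd ℂ) (A0 t) * A2 t)
    (hode2 : ∀ t, deriv A2 t = (Complex.I * c2) * A0 t * A1 t) :
    ∀ t : ℝ,
      (‖A0 t‖)^2
        ≤ |c0| * ((‖A0 0‖)^2 / |c0| + (‖A2 0‖)^2 / |c2|)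
      ∧ (‖A2 t‖)^2
        ≤ |c2| * ((‖A0 0‖)^2 / |c0| + (‖A2 0‖)^2 / |c2|) :=
  stmt_3_general A0 A1 A2 c0 c2 hA0 hA2 hsign hode0 hode2
end

section
/- If in the conservative three-wave system all three real coefficients c₀, c₁, c₂ (with Jⱼ = i cⱼ) have the same sign, then all three wave energies E₀, E₁, E₂ are bounded for all time by constants depending only on the initial data. -/
/-!
With `P = conj (A₀ A₁) A₂`, the equations give `(|A₀|²)' = -2 c₀ Im P`, `(|A₁|²)' = -2 c₁ Im P`
and `(|A₂|²)' = 2 c₂ Im P`, so `c₂ |A₀|² + c₀ |A₂|²` and `c₂ |A₁|² + c₁ |A₂|²` are conserved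
(Manley–Rowe relations). When `c₀, c₁, c₂` have a common sign, both summands of each conserved
quantity have that sign, so each is bounded by the conserved value.
-/

open ComplexConjugate

theorem manleyRowe_conserved {u v w : ℝ → ℂ} {a b : ℝ}
    (hu : Differentiable ℝ u) (hw : Differentiable ℝ w)
    (hu' : ∀ t, deriv u t = (Complex.I * a) * conj (v t) * w t)
    (hw' : ∀ t, deriv w t = (Complex.I * b) * u t * v t) (t : ℝ) :
    b * ‖u t‖ ^ 2 + a * ‖w t‖ ^ 2 = b * ‖u 0‖ ^ 2 + a * ‖w 0‖ ^ 2 := by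
  have hderiv : ∀ s, HasDerivAt (fun s => b * ‖u s‖ ^ 2 + a * ‖w s‖ ^ 2) 0 s := by
    intro s
    refine ((((hu s).hasDerivAt.norm_sq).const_mul b).add
      (((hw s).hasDerivAt.norm_sq).const_mul a)).congr_deriv ?_
    rw [Complex.inner, Complex.inner, hu', hw']
    simp only [Complex.mul_re, Complex.mul_im, Complex.conj_re, Complex.conj_im,
      Complex.I_re, Complex.I_im, Complex.ofReal_re, Complex.ofReal_im]
    ring
  exact is_const_of_deriv_eq_zero (fun s => (hderiv s).differentiableAt)
    (fun s => (hderiv s).deriv) t 0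

theorem le_div_of_mul_add_mul_eq {a b x y K : ℝ} (hab : 0 < a * b) (hy : 0 ≤ y)
    (h : a * x + b * y = K) : x ≤ K / a := by
  have ha : a ≠ 0 := left_ne_zero_of_mul hab.ne'
  have hsq : a ^ 2 * x ≤ a * K := by
    have : a ^ 2 * x = a * K - a * b * y := by rw [← h]; ring
    nlinarith [mul_nonneg hab.le hy]
  calc x = a ^ 2 * x / a ^ 2 := by field_simp
    _ ≤ a * K / a ^ 2 := by gcongr
    _ = K / a := by field_simp

theorem stmt_4_general (A0 A1 A2 : ℝ → ℂ) (c0 c1 c2 : ℝ)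
    (hA0 : Differentiable ℝ A0) (hA1 : Differentiable ℝ A1)
    (hA2 : Differentiable ℝ A2)
    (hsign01 : 0 < c0 * c1) (hsign02 : 0 < c0 * c2)
    (hode0 : ∀ t, deriv A0 t = (Complex.I * c0) * (starRingEnd ℂ) (A1 t) * A2 t)
    (hode1 : ∀ t, deriv A1 t = (Complex.I * c1) * (starRingEnd ℂ) (A0 t) * A2 t)
    (hode2 : ∀ t, deriv A2 t = (Complex.I * c2) * A0 t * A1 t) :
    ∃ M0 M1 M2 : ℝ, ∀ t : ℝ,
      ‖A0 t‖^2 ≤ M0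
      ∧ ‖A1 t‖^2 ≤ M1
      ∧ ‖A2 t‖^2 ≤ M2 := by
  have hsign12 : 0 < c1 * c2 :=
    pos_of_mul_pos_right (by nlinarith [mul_pos hsign01 hsign02]) (sq_nonneg c0)
  have h02 := manleyRowe_conserved hA0 hA2 hode0 hode2
  have h12 := manleyRowe_conserved hA1 hA2 hode1 (fun t => by rw [hode2, mul_right_comm])
  refine ⟨(c2 * ‖A0 0‖ ^ 2 + c0 * ‖A2 0‖ ^ 2) / c2, (c2 * ‖A1 0‖ ^ 2 + c1 * ‖A2 0‖ ^ 2) / c2,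
    (c2 * ‖A0 0‖ ^ 2 + c0 * ‖A2 0‖ ^ 2) / c0, fun t => ⟨?_, ?_, ?_⟩⟩
  · exact le_div_of_mul_add_mul_eq (by linarith) (sq_nonneg _) (h02 t)
  · exact le_div_of_mul_add_mul_eq (by linarith) (sq_nonneg _) (h12 t)
  · exact le_div_of_mul_add_mul_eq (by linarith) (sq_nonneg _) ((add_comm _ _).trans (h02 t))

/-- If all three coefficients `c₀, c₁, c₂` have the same sign, then all three
wave energies are bounded for all time by constants depending only on the
initial data. -/
theorem stmt_4 (A0 A1 A2 : ℝ → ℂ) (c0 c1 c2 : ℝ)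
    (hA0 : Differentiable ℝ A0) (hA1 : Differentiable ℝ A1)
    (hA2 : Differentiable ℝ A2)
    (hc0 : c0 ≠ 0) (hc1 : c1 ≠ 0) (hc2 : c2 ≠ 0)
    (hsign01 : 0 < c0 * c1) (hsign02 : 0 < c0 * c2)
    (hode0 : ∀ t, deriv A0 t = (Complex.I * c0) * (starRingEnd ℂ) (A1 t) * A2 t)
    (hode1 : ∀ t, deriv A1 t = (Complex.I * c1) * (starRingEnd ℂ) (A0 t) * A2 t)
    (hode2 : ∀ t, deriv A2 t = (Complex.I * c2) * A0 t * A1 t) :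
    ∃ M0 M1 M2 : ℝ, ∀ t : ℝ,
      ‖A0 t‖^2 ≤ M0
      ∧ ‖A1 t‖^2 ≤ M1
      ∧ ‖A2 t‖^2 ≤ M2 :=
  stmt_4_general A0 A1 A2 c0 c1 c2 hA0 hA1 hA2 hsign01 hsign02 hode0 hode1 hode2
end
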